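/- arXiv:1207.6741 — 3 statements merged into one kernel-verified Lean document; each statement's English description precedes it below -/
import Mathlib

section
/- Let A be a unital C*-algebra, χ a state on A, x ∈ A a unitary, and P ∈ A a projection with Q := 1 − P. Let ε > 0 and suppose χ(Q) ≤ ε², χ(x* Q x) ≤ ε², and χ(x Q x*) ≤ ε². Then ‖x − P x P‖♯_χ ≤ 6ε, where ‖y‖♯_χ = (χ(y*y)^{1/2} + χ(y y*)^{1/2})/2. -/
open ComplexOrder

theorem stmt7 {A : Type*} [CStarAlgebra A] [PartialOrder A] [StarOrderedRing A]
    (χ : A →ₗ[ℂ] ℂ) (hχ_pos : ∀ x : A, 0 ≤ x → 0 ≤ χ x) (hχ_one : χ 1 = 1)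
    (x : A) (hx : x ∈ unitary A)
    (P Q : A) (hP_sa : star P = P) (hP_idem : P * P = P) (hQ : Q = 1 - P)
    (ε : ℝ) (hε : 0 < ε)
    (h1 : χ Q ≤ (ε ^ 2 : ℂ)) (h2 : χ (star x * Q * x) ≤ (ε ^ 2 : ℂ))
    (h3 : χ (x * Q * star x) ≤ (ε ^ 2 : ℂ)) :
    (Real.sqrt ((χ (star (x - P * x * P) * (x - P * x * P))).re)
      + Real.sqrt ((χ ((x - P * x * P) * star (x - P * x * P))).re)) / 2 ≤ 6 * ε := by
  have hQ_sa : star Q = Q := by rw [hQ]; simp [hP_sa]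
  have hQ_idem : Q * Q = Q := by
    rw [hQ]; rw [show (1 - P) * (1 - P) = 1 - P - P + P * P by noncomm_ring, hP_idem]
    abel
  have hPQ : P + Q = 1 := by rw [hQ]; abel
  have hxx : star x * x = 1 := (Unitary.mem_iff.mp hx).1
  have hxx' : x * star x = 1 := (Unitary.mem_iff.mp hx).2
  -- monotonicity of χ
  have hmono : ∀ a b : A, a ≤ b → χ a ≤ χ b := by
    intro a b hab
    have := hχ_pos (b - a) (sub_nonneg.2 hab)
    rw [map_sub] at this
    exact sub_nonneg.mp this
  -- parallelogram-type estimate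
  have key : ∀ a b : A, χ (star (a + b) * (a + b))
      ≤ χ (star a * a) + χ (star b * b) + (χ (star a * a) + χ (star b * b)) := by
    intro a b
    have h := star_mul_self_nonneg (a - b)
    have hle : star (a + b) * (a + b)
        ≤ star a * a + star b * b + (star a * a + star b * b) := by
      rw [← sub_nonneg]
      have e : star a * a + star b * b + (star a * a + star b * b)
          - star (a + b) * (a + b) = star (a - b) * (a - b) := by
        simp only [star_add, star_sub]; noncomm_ring
      rw [e]; exact h
    calc χ (star (a + b) * (a + b))
        ≤ χ (star a * a + star b * b + (star a * a + star b * b)) := hmono _ _ hle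
      _ = χ (star a * a) + χ (star b * b) + (χ (star a * a) + χ (star b * b)) := by
          simp [map_add]
  -- main estimate for a generic unitary-like element z
  have main : ∀ z : A, star z * z = 1 → χ (star z * Q * z) ≤ (ε ^ 2 : ℂ) →
      Real.sqrt ((χ (star (P * z * Q + Q * z) * (P * z * Q + Q * z))).re) ≤ 2 * ε := by
    intro z hz hχz
    -- bound for the P*z*Q term
    have hb1 : χ (star (P * z * Q) * (P * z * Q)) ≤ (ε ^ 2 : ℂ) := by
      have hle : star (P * z * Q) * (P * z * Q) ≤ Q := by
        rw [← sub_nonneg]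
        have e : Q - star (P * z * Q) * (P * z * Q) = star (Q * z * Q) * (Q * z * Q) := by
          simp only [star_mul, hP_sa, hQ_sa]
          rw [show Q * (star z * P) * (P * z * Q) = Q * star z * (P * P) * z * Q by noncomm_ring,
            hP_idem]
          rw [show Q * (star z * Q) * (Q * z * Q) = Q * star z * (Q * Q) * z * Q by noncomm_ring,
            hQ_idem]
          rw [sub_eq_iff_eq_add]
          rw [show Q * star z * Q * z * Q + Q * star z * P * z * Q
              = Q * (star z * ((Q + P) * z)) * Q by noncomm_ring]
          rw [add_comm Q P, hPQ, one_mul, hz, mul_one, hQ_idem]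
        rw [e]; exact star_mul_self_nonneg _
      exact le_trans (hmono _ _ hle) h1
    -- bound for the Q*z term
    have hb2 : χ (star (Q * z) * (Q * z)) ≤ (ε ^ 2 : ℂ) := by
      have e : star (Q * z) * (Q * z) = star z * Q * z := by
        rw [star_mul, hQ_sa, show star z * Q * (Q * z) = star z * (Q * Q) * z by noncomm_ring,
          hQ_idem]
      rw [e]; exact hχz
    have hb : χ (star (P * z * Q + Q * z) * (P * z * Q + Q * z))
        ≤ ((4 * ε ^ 2 : ℝ) : ℂ) := by
      refine le_trans (key _ _) ?_
      have : ((4 * ε ^ 2 : ℝ) : ℂ) = (ε ^ 2 : ℂ) + (ε ^ 2 : ℂ) + ((ε ^ 2 : ℂ) + (ε ^ 2 : ℂ)) := by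
        push_cast; ring
      rw [this]
      exact add_le_add (add_le_add hb1 hb2) (add_le_add hb1 hb2)
    have hre : (χ (star (P * z * Q + Q * z) * (P * z * Q + Q * z))).re ≤ 4 * ε ^ 2 := by
      have := (Complex.le_def.mp hb).1
      rwa [Complex.ofReal_re] at this
    calc Real.sqrt ((χ (star (P * z * Q + Q * z) * (P * z * Q + Q * z))).re)
        ≤ Real.sqrt (4 * ε ^ 2) := Real.sqrt_le_sqrt hre
      _ = 2 * ε := by
          rw [show (4 : ℝ) * ε ^ 2 = (2 * ε) ^ 2 by ring, Real.sqrt_sq (by positivity)]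
  -- decompositions
  have hy : x - P * x * P = P * x * Q + Q * x := by rw [hQ]; noncomm_ring
  have hy' : star (x - P * x * P) = P * star x * Q + Q * star x := by
    simp only [star_sub, star_mul, hP_sa]
    rw [hQ]; noncomm_ring
  have s1 : Real.sqrt ((χ (star (x - P * x * P) * (x - P * x * P))).re) ≤ 2 * ε := by
    rw [hy]; exact main x hxx h2
  have s2 : Real.sqrt ((χ ((x - P * x * P) * star (x - P * x * P))).re) ≤ 2 * ε := by
    have e : (x - P * x * P) * star (x - P * x * P)
        = star (P * star x * Q + Q * star x) * (P * star x * Q + Q * star x) := by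
      rw [← hy', star_star]
    rw [e]
    refine main (star x) (by rw [star_star]; exact hxx') ?_
    rw [star_star]; exact h3
  have h6 : 2 * ε ≤ 6 * ε := by nlinarith
  linarith
end

section
/- (Kaplansky parallelogram law in B(H).) Let H be a Hilbert space and let p, q be orthogonal projections on H. Then there exists a partial isometry v ∈ B(H) such that v*v = p − (p ∧ q) and v v* = (p ∨ q) − q, where p ∧ q is the projection onto range(p) ∩ range(q) and p ∨ q is the projection onto the closed span of range(p) ∪ range(q). -/
/-!
Take `v` from the polar decomposition of `a = (1 - q) p`: the map `|a| x ↦ a x` is isometric, so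
it extends to a partial isometry `v` with `ker (v* v) = ker a` and `ker (v v*) = ker a*`.
A vector is killed by `a` iff `p x ∈ range p ∩ range q`, i.e. iff `p x = (p ∧ q) x`; and since
`ker (p ∨ q) = ker p ∩ ker q`, a vector is killed by `a* = p (1 - q)` iff it is killed by
`p ∨ q - q`. Star projections with equal kernels are equal.
-/

open ContinuousLinearMap
open scoped InnerProduct

def IsPartialIsometry {R : Type*} [Mul R] [Star R] (v : R) : Prop := v * star v * v = v

namespace IsPartialIsometry

variable {R : Type*} [Semiring R] [StarRing R] {v : R}

theorem isStarProjection_star_mul_self (hv : IsPartialIsometry v) :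
    IsStarProjection (star v * v) where
  isIdempotentElem := by
    rw [IsIdempotentElem, ← mul_assoc, mul_assoc (star v), mul_assoc (star v), hv]
  isSelfAdjoint := by simp [IsSelfAdjoint, star_mul]

theorem isStarProjection_mul_star_self (hv : IsPartialIsometry v) :
    IsStarProjection (v * star v) where
  isIdempotentElem := by rw [IsIdempotentElem, ← mul_assoc, hv]
  isSelfAdjoint := by simp [IsSelfAdjoint, star_mul]

end IsPartialIsometry

theorem isPartialIsometry_of_isStarProjection_star_mul_self {A : Type*} [NonUnitalNormedRing A]
    [StarRing A] [CStarRing A] {v : A} (h : IsStarProjection (star v * v)) :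
    IsPartialIsometry v := by
  set e := star v * v with he_def
  have he : e * e = e := h.isIdempotentElem
  have : star (v - v * e) * (v - v * e) = 0 := calc
    star (v - v * e) * (v - v * e) = e - e * e - e * e + e * e * e := by
      rw [star_sub, star_mul, h.isSelfAdjoint.star_eq, he_def]; noncomm_ring
    _ = 0 := by simp [he]
  rw [CStarRing.star_mul_self_eq_zero_iff, sub_eq_zero] at this
  rw [IsPartialIsometry, mul_assoc]
  exact this.symm

namespace ContinuousLinearMap

theorem IsIdempotentElem.mul_eq_right_of_range_le {R M : Type*} [Semiring R] [TopologicalSpace M]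
    [AddCommMonoid M] [Module R M] {p r : M →L[R] M} (hp : IsIdempotentElem p)
    (h : r.range ≤ p.range) : p * r = r :=
  ContinuousLinearMap.ext fun x =>
    (LinearMap.IsIdempotentElem.mem_range_iff (isIdempotentElem_toLinearMap_iff.mpr hp)).mp
      (h ⟨x, rfl⟩)

section InnerProductSpace

variable {𝕜 E : Type*} [RCLike 𝕜] [NormedAddCommGroup E] [InnerProductSpace 𝕜 E]
  [CompleteSpace E]

theorem IsStarProjection.ext_of_ker {e f : E →L[𝕜] E} (he : IsStarProjection e)
    (hf : IsStarProjection f) (h : e.ker = f.ker) : e = f := by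
  have range_one_sub {g : E →L[𝕜] E} (hg : IsStarProjection g) : (1 - g).range = g.ker :=
    (LinearMap.IsIdempotentElem.ker_eq_range_one_sub hg.isIdempotentElem.toLinearMap).symm
  simpa using he.one_sub.ext hf.one_sub (by rw [range_one_sub he, range_one_sub hf, h])

theorem ker_sub_eq_ker_one_sub_mul {p q r : E →L[𝕜] E} (hp : IsStarProjection p)
    (hq : IsIdempotentElem q) (hr : IsStarProjection r) (h : r.range = p.range ⊓ q.range) :
    (p - r).ker = ((1 - q) * p).ker := by
  have hpr : p * r = r := hp.isIdempotentElem.mul_eq_right_of_range_le (h ▸ inf_le_left)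
  have hqr : q * r = r := hq.mul_eq_right_of_range_le (h ▸ inf_le_right)
  have hrp : r * p = r := by
    simpa [hp.isSelfAdjoint.star_eq, hr.isSelfAdjoint.star_eq] using congr(star $hpr)
  ext x
  simp only [LinearMap.mem_ker, coe_coe, sub_apply, mul_apply_eq_comp, one_apply_eq_self,
    sub_eq_zero]
  refine ⟨fun hx => by rw [hx, ← mul_apply_eq_comp, hqr], fun hx => ?_⟩
  have : p x ∈ r.range :=
    h ▸ ⟨LinearMap.mem_range_self _ x, hx ▸ LinearMap.mem_range_self _ (p x)⟩
  rw [← (LinearMap.IsIdempotentElem.mem_range_iff hr.isIdempotentElem.toLinearMap).mp this]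
  exact congr($hrp x)

theorem ker_sub_eq_ker_mul_one_sub {p q s : E →L[𝕜] E} (hp : IsSelfAdjoint p)
    (hq : IsStarProjection q) (hs : IsStarProjection s)
    (h : s.range = (p.range ⊔ q.range).topologicalClosure) :
    (s - q).ker = (p * (1 - q)).ker := by
  have hsq : s * q = q := hs.isIdempotentElem.mul_eq_right_of_range_le <|
    h ▸ le_sup_right.trans (Submodule.le_topologicalClosure _)
  have hker_s : s.ker = p.ker ⊓ q.ker := by
    rw [← hs.isSelfAdjoint.isStarNormal.orthogonal_range,
      ← hp.isStarNormal.orthogonal_range, ← hq.isSelfAdjoint.isStarNormal.orthogonal_range, h,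
      Submodule.orthogonal_closure, Submodule.inf_orthogonal]
  have hq_sub x : q (x - q x) = 0 := by
    rw [map_sub, ← mul_apply_eq_comp, hq.isIdempotentElem.eq, sub_self]
  ext x
  have := congr(x - q x ∈ $hker_s)
  simp only [LinearMap.mem_ker, Submodule.mem_inf, coe_coe, hq_sub, and_true] at this
  have hsq' : s (q x) = q x := by rw [← mul_apply_eq_comp, hsq]
  simpa [map_sub, hsq', sub_eq_zero] using this

end InnerProductSpace

theorem exists_comp_eq_and_adjoint_comp_self_eq_starProjection {𝕜 E F G : Type*} [RCLike 𝕜]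
    [NormedAddCommGroup E] [NormedSpace 𝕜 E]
    [NormedAddCommGroup F] [InnerProductSpace 𝕜 F] [CompleteSpace F]
    [NormedAddCommGroup G] [InnerProductSpace 𝕜 G] [CompleteSpace G]
    (m : E →L[𝕜] F) (a : E →L[𝕜] G) (h : ∀ x, ‖m x‖ = ‖a x‖) :
    ∃ v : F →L[𝕜] G, v ∘L m = a ∧ v† ∘L v = m.range.topologicalClosure.starProjection := by
  set K := m.range.topologicalClosure
  let e : E →ₗ[𝕜] K :=
    (m : E →ₗ[𝕜] F).codRestrict K fun x => m.range.le_topologicalClosure ⟨x, rfl⟩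
  have he_dense : DenseRange e := by
    refine Topology.IsInducing.subtypeVal.dense_iff.mpr fun k => ?_
    rw [← Set.range_comp]
    exact k.2
  let w : K →L[𝕜] G := (a : E →ₗ[𝕜] G).extendOfNorm e
  have hw x : w (e x) = a x := LinearMap.extendOfNorm_eq he_dense ⟨1, fun x => by simp [e, h]⟩ x
  have hw_norm k : ‖w k‖ = ‖k‖ :=
    he_dense.induction_on k (isClosed_eq (by fun_prop) (by fun_prop)) fun x => by
      simp [hw, e, h]
  have hw_inner := (LinearMap.norm_map_iff_inner_map_map w).mp hw_norm
  refine ⟨w ∘L K.orthogonalProjectionOnto, ?_, ?_⟩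
  · ext x
    have : K.orthogonalProjectionOnto (m x) = e x :=
      K.orthogonalProjectionOnto_mem_subspace_eq_self (e x)
    rw [comp_apply, comp_apply, this, hw]
  · ext y
    refine ext_inner_left 𝕜 fun x => ?_
    rw [comp_apply, adjoint_inner_right]
    exact (hw_inner _ _).trans (K.inner_orthogonalProjectionOnto_eq_of_mem_right _ _)

end ContinuousLinearMap

section Polar

variable {H : Type*} [NormedAddCommGroup H] [InnerProductSpace ℂ H] [CompleteSpace H]

theorem CFC.norm_abs_apply (a : H →L[ℂ] H) (x : H) : ‖CFC.abs a x‖ = ‖a x‖ := by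
  have habs : (CFC.abs a)† ∘L CFC.abs a = a† ∘L a := by
    rw [← star_eq_adjoint, ← star_eq_adjoint, (CFC.abs_nonneg a).isSelfAdjoint.star_eq]
    exact CFC.abs_mul_abs a
  have := apply_norm_sq_eq_inner_adjoint_left (CFC.abs a) x
  rw [habs, ← apply_norm_sq_eq_inner_adjoint_left] at this
  exact (pow_left_inj₀ (norm_nonneg _) (norm_nonneg _) two_ne_zero).mp this

theorem exists_isPartialIsometry_ker_eq (a : H →L[ℂ] H) :
    ∃ v : H →L[ℂ] H, IsPartialIsometry v ∧ (star v * v).ker = a.ker ∧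
      (v * star v).ker = (star a).ker := by
  set m := CFC.abs a
  have hm : IsSelfAdjoint m := (CFC.abs_nonneg a).isSelfAdjoint
  have hker_m : m.ker = a.ker := by
    ext x
    rw [LinearMap.mem_ker, LinearMap.mem_ker, coe_coe, coe_coe, ← norm_eq_zero,
      CFC.norm_abs_apply, norm_eq_zero]
  obtain ⟨v, hvm, hvv⟩ := exists_comp_eq_and_adjoint_comp_self_eq_starProjection m a
    (CFC.norm_abs_apply a)
  set P := m.range.topologicalClosure.starProjection
  rw [← star_eq_adjoint, ← mul_def] at hvv
  have hv : IsPartialIsometry v :=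
    isPartialIsometry_of_isStarProjection_star_mul_self (hvv ▸ isStarProjection_starProjection)
  have hker_P : P.ker = m.ker := by
    rw [Submodule.ker_starProjection, Submodule.orthogonal_closure,
      hm.isStarNormal.orthogonal_range]
  refine ⟨v, hv, by rw [hvv, hker_P, hker_m], ?_⟩
  have ha : star a = m * star v := by rw [← hvm, ← mul_def, star_mul, hm.star_eq]
  have hPv : P * star v = star v := by
    have hvP : v * P = v := by rw [← hvv, ← mul_assoc]; exact hv
    have hP : IsSelfAdjoint P := isStarProjection_starProjection.isSelfAdjoint
    rw [← hP.star_eq, ← star_mul, hvP]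
  rw [mul_def, star_eq_adjoint, ker_self_comp_adjoint, ← star_eq_adjoint, ha]
  ext y
  simp only [LinearMap.mem_ker, coe_coe, mul_apply_eq_comp]
  refine ⟨fun h => by rw [h, map_zero], fun h => ?_⟩
  -- `v* y` lies in `range P`, and `ker m = ker P`
  rw [← hPv, mul_apply_eq_comp]
  exact (hker_P.symm ▸ h : star v y ∈ P.ker)

end Polar

theorem stmt13 {H : Type*} [NormedAddCommGroup H] [InnerProductSpace ℂ H] [CompleteSpace H]
    (p q : H →L[ℂ] H) (hp_sa : star p = p) (hp_idem : p * p = p)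
    (hq_sa : star q = q) (hq_idem : q * q = q)
    (r : H →L[ℂ] H) (hr_sa : star r = r) (hr_idem : r * r = r)
    (hr_range : LinearMap.range (r : H →ₗ[ℂ] H) = LinearMap.range (p : H →ₗ[ℂ] H) ⊓ LinearMap.range (q : H →ₗ[ℂ] H))
    (s : H →L[ℂ] H) (hs_sa : star s = s) (hs_idem : s * s = s)
    (hs_range : LinearMap.range (s : H →ₗ[ℂ] H)
      = (LinearMap.range (p : H →ₗ[ℂ] H) ⊔ LinearMap.range (q : H →ₗ[ℂ] H)).topologicalClosure) :
    ∃ v : H →L[ℂ] H, v * star v * v = v ∧ star v * v = p - r ∧ v * star v = s - q := by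
  have hp : IsStarProjection p := ⟨hp_idem, hp_sa⟩
  have hq : IsStarProjection q := ⟨hq_idem, hq_sa⟩
  have hr : IsStarProjection r := ⟨hr_idem, hr_sa⟩
  have hs : IsStarProjection s := ⟨hs_idem, hs_sa⟩
  have hpr : p * r = r := hp.isIdempotentElem.mul_eq_right_of_range_le (hr_range ▸ inf_le_left)
  have hsq : s * q = q := hs.isIdempotentElem.mul_eq_right_of_range_le <|
    hs_range ▸ le_sup_right.trans (Submodule.le_topologicalClosure _)
  obtain ⟨v, hv, hker_init, hker_final⟩ := exists_isPartialIsometry_ker_eq ((1 - q) * p)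
  refine ⟨v, hv, hv.isStarProjection_star_mul_self.ext_of_ker (hr.sub_of_mul_eq_right hp hpr) ?_,
    hv.isStarProjection_mul_star_self.ext_of_ker (hq.sub_of_mul_eq_right hs hsq) ?_⟩
  · rw [hker_init, ker_sub_eq_ker_one_sub_mul hp hq_idem hr hr_range]
  · rw [hker_final, star_mul, star_sub, star_one, hp_sa, hq_sa,
      ker_sub_eq_ker_mul_one_sub hp_sa hq hs hs_range]
end

section
/- Let H be an infinite-dimensional separable Hilbert space, let b₁, ..., b_n be bounded operators on H, and let p', q' be projections on H with infinite-dimensional ranges. Then there exist projections p ≤ p' and q ≤ q', both with infinite-dimensional ranges, such that p b_i q = 0 for all 1 ≤ i ≤ n. -/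
/-!
Build, by a greedy induction, orthonormal sequences `u` in `range p'` and `v` in `range q'` with
`⟪u j, b i (v k)⟫ = 0` for all `i, j, k`: at each stage only finitely many vectors have to be
avoided, and an infinite-dimensional subspace always contains a unit vector orthogonal to a
finite set. Then `p` and `q` are the orthogonal projections onto the closed spans of `u` and `v`;
each `b i` maps the closed span of `v` into the orthogonal complement of that of `u`.
-/

section

open Set Submodule
open scoped InnerProductSpace

variable {𝕜 E : Type*} [RCLike 𝕜] [NormedAddCommGroup E] [InnerProductSpace 𝕜 E]

theorem Submodule.exists_norm_eq_one_forall_inner_eq_zero {K : Submodule 𝕜 E}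
    (hK : ¬ FiniteDimensional 𝕜 K) {s : Set E} (hs : s.Finite) :
    ∃ x ∈ K, ‖x‖ = 1 ∧ ∀ y ∈ s, ⟪y, x⟫_𝕜 = 0 := by
  set F := span 𝕜 s
  have : FiniteDimensional 𝕜 F := FiniteDimensional.span_of_finite 𝕜 hs
  obtain ⟨x, hxF, hx⟩ : ∃ x : K, F.orthogonalProjectionOnto x = 0 ∧ x ≠ 0 := by
    by_contra! h
    exact hK (.of_injective (F.orthogonalProjectionOnto.toLinearMap ∘ₗ K.subtype)
      ((injective_iff_map_eq_zero _).2 h))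
  rw [orthogonalProjectionOnto_eq_zero_iff] at hxF
  have hx0 : (x : E) ≠ 0 := by simpa using hx
  refine ⟨(‖(x : E)‖⁻¹ : 𝕜) • (x : E), K.smul_mem _ x.2, norm_smul_inv_norm hx0, fun y hy => ?_⟩
  rw [inner_smul_right, inner_right_of_mem_orthogonal (subset_span hy) hxF, mul_zero]

theorem orthonormal_of_forall_lt {ι : Type*} [LinearOrder ι] {v : ι → E}
    (hn : ∀ i, ‖v i‖ = 1) (ho : ∀ i j, i < j → ⟪v i, v j⟫_𝕜 = 0) : Orthonormal 𝕜 v :=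
  ⟨hn, fun i j hij => (lt_or_gt_of_ne hij).elim (ho i j) fun h => inner_eq_zero_symm.mp (ho j i h)⟩

theorem Orthonormal.not_finiteDimensional_topologicalClosure_span {ι : Type*} [Infinite ι]
    {v : ι → E} (hv : Orthonormal 𝕜 v) :
    ¬ FiniteDimensional 𝕜 (span 𝕜 (range v)).topologicalClosure := fun _ =>
  (LinearIndependent.of_comp (span 𝕜 (range v)).topologicalClosure.subtype
    (v := fun i => (⟨v i, le_topologicalClosure _ (subset_span (mem_range_self i))⟩ :
      (span 𝕜 (range v)).topologicalClosure))
    hv.linearIndependent).finite.false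

theorem Submodule.topologicalClosure_span_range_le_comap_orthogonal {ι κ : Type*}
    {u : ι → E} {v : κ → E} (T : E →L[𝕜] E) (h : ∀ j k, ⟪u j, T (v k)⟫_𝕜 = 0) :
    (span 𝕜 (range v)).topologicalClosure ≤
      ((span 𝕜 (range u)).topologicalClosureᗮ).comap (T : E →ₗ[𝕜] E) := by
  rw [orthogonal_closure]
  refine topologicalClosure_minimal _ (span_le.2 ?_)
    ((isClosed_orthogonal _).preimage T.continuous)
  rintro _ ⟨k, rfl⟩
  have : span 𝕜 (range u) ⟂ span 𝕜 {T (v k)} := isOrtho_span.2 <| by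
    rintro _ ⟨j, rfl⟩ _ rfl
    exact h j k
  exact this.symm (mem_span_singleton_self _)

theorem ContinuousLinearMap.IsIdempotentElem.topologicalClosure_span_range_le_range {ι : Type*}
    {P : E →L[𝕜] E} (hP : IsIdempotentElem P) {v : ι → E}
    (hv : ∀ i, v i ∈ LinearMap.range (P : E →ₗ[𝕜] E)) :
    (span 𝕜 (range v)).topologicalClosure ≤ LinearMap.range (P : E →ₗ[𝕜] E) :=
  topologicalClosure_minimal _ (span_le.2 (range_subset_iff.2 hv)) (isClosed_range hP)

theorem Submodule.starProjection_mul_mul_starProjection_eq_zero {K L : Submodule 𝕜 E}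
    [K.HasOrthogonalProjection] [L.HasOrthogonalProjection] {T : E →L[𝕜] E}
    (h : L ≤ Kᗮ.comap (T : E →ₗ[𝕜] E)) : K.starProjection * T * L.starProjection = 0 := by
  ext x
  exact (starProjection_apply_eq_zero_iff K).2 (h (L.starProjection_apply_mem x))

theorem Submodule.mul_starProjection_eq_self {K : Submodule 𝕜 E} [K.HasOrthogonalProjection]
    {P : E →L[𝕜] E} (hP : IsIdempotentElem P) (hK : K ≤ LinearMap.range (P : E →ₗ[𝕜] E)) :
    P * K.starProjection = K.starProjection := by
  have := (LinearMap.IsIdempotentElem.comp_eq_right_iff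
    (ContinuousLinearMap.IsIdempotentElem.toLinearMap hP) (K.starProjection : E →ₗ[𝕜] E)).2
    (by rwa [range_starProjection])
  exact ContinuousLinearMap.coe_inj.1 this

theorem exists_orthonormal_seq_forall_inner_apply_eq_zero [CompleteSpace E] {ι : Type*}
    [Finite ι] (b : ι → E →L[𝕜] E) {K L : Submodule 𝕜 E} (hK : ¬ FiniteDimensional 𝕜 K)
    (hL : ¬ FiniteDimensional 𝕜 L) :
    ∃ u v : ℕ → E, Orthonormal 𝕜 u ∧ Orthonormal 𝕜 v ∧ (∀ k, u k ∈ K) ∧ (∀ k, v k ∈ L) ∧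
      ∀ i j k, ⟪u j, b i (v k)⟫_𝕜 = 0 := by
  obtain ⟨w, hw, hww⟩ := exists_seq_of_forall_finset_exists
    (fun w : E × E => w.1 ∈ K ∧ ‖w.1‖ = 1 ∧ w.2 ∈ L ∧ ‖w.2‖ = 1 ∧ ∀ i, ⟪w.1, b i w.2⟫_𝕜 = 0)
    (fun w w' : E × E => ⟪w.1, w'.1⟫_𝕜 = 0 ∧ ⟪w.2, w'.2⟫_𝕜 = 0 ∧
      ∀ i, ⟪w.1, b i w'.2⟫_𝕜 = 0 ∧ ⟪w'.1, b i w.2⟫_𝕜 = 0) fun s _ => by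
    obtain ⟨y, hyL, hy1, hy⟩ := exists_norm_eq_one_forall_inner_eq_zero hL
      (s := Prod.snd '' (s : Set (E × E)) ∪ ⋃ i, (fun w : E × E => (b i).adjoint w.1) '' s)
      (toFinite _)
    obtain ⟨x, hxK, hx1, hx⟩ := exists_norm_eq_one_forall_inner_eq_zero hK
      (s := Prod.fst '' (s : Set (E × E)) ∪ (⋃ i, (fun w : E × E => b i w.2) '' s) ∪
        range fun i => b i y)
      (toFinite _)
    refine ⟨(x, y), ⟨hxK, hx1, hyL, hy1, fun i => ?_⟩, fun w hws => ⟨?_, ?_, fun i => ⟨?_, ?_⟩⟩⟩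
    · exact inner_eq_zero_symm.1 (hx _ (Or.inr ⟨i, rfl⟩))
    · exact hx _ (Or.inl (Or.inl ⟨w, hws, rfl⟩))
    · exact hy _ (Or.inl ⟨w, hws, rfl⟩)
    · rw [← ContinuousLinearMap.adjoint_inner_left]
      exact hy _ (Or.inr (mem_iUnion.2 ⟨i, w, hws, rfl⟩))
    · exact inner_eq_zero_symm.1 (hx _ (Or.inl (Or.inr (mem_iUnion.2 ⟨i, w, hws, rfl⟩))))
  refine ⟨fun k => (w k).1, fun k => (w k).2,
    orthonormal_of_forall_lt (fun k => (hw k).2.1) fun j k h => (hww j k h).1,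
    orthonormal_of_forall_lt (fun k => (hw k).2.2.2.1) fun j k h => (hww j k h).2.1,
    fun k => (hw k).1, fun k => (hw k).2.2.1, fun i j k => ?_⟩
  rcases lt_trichotomy j k with h | rfl | h
  · exact ((hww j k h).2.2 i).1
  · exact (hw j).2.2.2.2 i
  · exact ((hww k j h).2.2 i).2

end

theorem stmt14_general {H : Type*} [NormedAddCommGroup H] [InnerProductSpace ℂ H] [CompleteSpace H]
    (n : ℕ) (b : Fin n → (H →L[ℂ] H))
    (p' q' : H →L[ℂ] H) (hp'_idem : p' * p' = p')
    (hq'_idem : q' * q' = q')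
    (hp'_inf : ¬ FiniteDimensional ℂ (LinearMap.range (p' : H →ₗ[ℂ] H)))
    (hq'_inf : ¬ FiniteDimensional ℂ (LinearMap.range (q' : H →ₗ[ℂ] H))) :
    ∃ p q : H →L[ℂ] H, star p = p ∧ p * p = p ∧ star q = q ∧ q * q = q ∧
      p' * p = p ∧ q' * q = q ∧
      ¬ FiniteDimensional ℂ (LinearMap.range (p : H →ₗ[ℂ] H)) ∧
      ¬ FiniteDimensional ℂ (LinearMap.range (q : H →ₗ[ℂ] H)) ∧
      ∀ i : Fin n, p * b i * q = 0 := by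
  obtain ⟨u, v, hu, hv, hup, hvq, huv⟩ :=
    exists_orthonormal_seq_forall_inner_apply_eq_zero b hp'_inf hq'_inf
  set P := (Submodule.span ℂ (Set.range u)).topologicalClosure
  set Q := (Submodule.span ℂ (Set.range v)).topologicalClosure
  have hPp' : P ≤ LinearMap.range (p' : H →ₗ[ℂ] H) :=
    ContinuousLinearMap.IsIdempotentElem.topologicalClosure_span_range_le_range hp'_idem hup
  have hQq' : Q ≤ LinearMap.range (q' : H →ₗ[ℂ] H) :=
    ContinuousLinearMap.IsIdempotentElem.topologicalClosure_span_range_le_range hq'_idem hvq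
  refine ⟨P.starProjection, Q.starProjection, isSelfAdjoint_starProjection P,
    P.isIdempotentElem_starProjection, isSelfAdjoint_starProjection Q,
    Q.isIdempotentElem_starProjection, Submodule.mul_starProjection_eq_self hp'_idem hPp',
    Submodule.mul_starProjection_eq_self hq'_idem hQq', ?_, ?_, fun i =>
    Submodule.starProjection_mul_mul_starProjection_eq_zero
      (Submodule.topologicalClosure_span_range_le_comap_orthogonal (b i) (huv i))⟩
  · rw [Submodule.range_starProjection]
    exact hu.not_finiteDimensional_topologicalClosure_span
  · rw [Submodule.range_starProjection]
    exact hv.not_finiteDimensional_topologicalClosure_span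

theorem stmt14 {H : Type*} [NormedAddCommGroup H] [InnerProductSpace ℂ H] [CompleteSpace H]
    [TopologicalSpace.SeparableSpace H] (hH : ¬ FiniteDimensional ℂ H)
    (n : ℕ) (b : Fin n → (H →L[ℂ] H))
    (p' q' : H →L[ℂ] H) (hp'_sa : star p' = p') (hp'_idem : p' * p' = p')
    (hq'_sa : star q' = q') (hq'_idem : q' * q' = q')
    (hp'_inf : ¬ FiniteDimensional ℂ (LinearMap.range (p' : H →ₗ[ℂ] H)))
    (hq'_inf : ¬ FiniteDimensional ℂ (LinearMap.range (q' : H →ₗ[ℂ] H))) :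
    ∃ p q : H →L[ℂ] H, star p = p ∧ p * p = p ∧ star q = q ∧ q * q = q ∧
      p' * p = p ∧ q' * q = q ∧
      ¬ FiniteDimensional ℂ (LinearMap.range (p : H →ₗ[ℂ] H)) ∧
      ¬ FiniteDimensional ℂ (LinearMap.range (q : H →ₗ[ℂ] H)) ∧
      ∀ i : Fin n, p * b i * q = 0 :=
  stmt14_general n b p' q' hp'_idem hq'_idem hp'_inf hq'_inf
end
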